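/- arXiv:2504.16654 — 2 statements merged into one kernel-verified Lean document; each statement's English description precedes it below -/
import Mathlib

section
/- Suppose there exists a utility function u: Q → R that is locally non-satiated and rationalises the pooled dataset {(p_i, q_i)}_{i=1}^N, meaning u(q_i) ≥ u(q) for all q with p_i · q ≤ p_i · q_i. Then for any cyclic sequence of observations i_1, ..., i_k with i_{k+1} = i_1 such that p_{i_ℓ} · q_{i_{ℓ+1}} ≤ p_{i_ℓ} · q_{i_ℓ} for all ℓ, it holds that p_{i_ℓ} · q_{i_{ℓ+1}} = p_{i_ℓ} · q_{i_ℓ} for all ℓ. -/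
/-!
Local non-satiation makes the budget sets tight: a bundle strictly inside the budget set of
observation `i` can be improved upon without leaving that budget set, so it is strictly worse
than `q i`. Along a weakly affordable cycle the utilities `u (q i)` are weakly decreasing, hence
constant, and so no step of the cycle can be strictly affordable.
-/

theorem lt_of_forall_le_of_localNonsat {E α β : Type*} [PseudoMetricSpace E] [Preorder α]
    [TopologicalSpace β] [LinearOrder β] [OrderClosedTopology β]
    {Q : Set E} {u : E → α} {g : E → β} {x : E} {b : β} {v : α}
    (hlns : ∀ ε > (0 : ℝ), ∃ y ∈ Q, dist y x < ε ∧ u x < u y)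
    (hg : ContinuousAt g x) (hx : g x < b) (hbound : ∀ y ∈ Q, g y ≤ b → u y ≤ v) :
    u x < v := by
  obtain ⟨ε, hε, hball⟩ := Metric.eventually_nhds_iff.1 (hg.eventually_lt_const hx)
  obtain ⟨y, hyQ, hyx, hxy⟩ := hlns ε hε
  exact hxy.trans_le (hbound y hyQ (hball hyx).le)

theorem Fin.apply_eq_of_apply_add_one_le {α : Type*} [PartialOrder α] {n : ℕ}
    {f : Fin (n + 1) → α} (hf : ∀ i, f (i + 1) ≤ f i) (i j : Fin (n + 1)) : f i = f j := by
  have hanti : Antitone f :=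
    Fin.antitone_iff_succ_le.2 fun i ↦ by simpa only [Fin.coeSucc_eq_succ] using hf i.castSucc
  have hwrap : f 0 ≤ f (Fin.last n) := by simpa only [Fin.last_add_one] using hf (Fin.last n)
  have hconst : ∀ k, f k = f 0 := fun k ↦
    le_antisymm (hanti (Fin.zero_le k)) (hwrap.trans (hanti (Fin.le_last k)))
  rw [hconst i, hconst j]

theorem stmt_1_general {N K : ℕ} (Q : Set (Fin K → ℝ))
    (p q : Fin N → Fin K → ℝ)
    (hqQ : ∀ i, q i ∈ Q)
    (u : (Fin K → ℝ) → ℝ)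
    (hlns : ∀ x ∈ Q, ∀ ε > (0 : ℝ), ∃ y ∈ Q, dist y x < ε ∧ u x < u y)
    (hrat : ∀ i, ∀ x ∈ Q, (∑ k, p i k * x k) ≤ (∑ k, p i k * q i k) → u x ≤ u (q i)) :
    ∀ (n : ℕ) (c : Fin (n + 1) → Fin N),
      (∀ ℓ : Fin (n + 1), ∑ k, p (c ℓ) k * q (c (ℓ + 1)) k ≤ ∑ k, p (c ℓ) k * q (c ℓ) k) →
      ∀ ℓ : Fin (n + 1), ∑ k, p (c ℓ) k * q (c (ℓ + 1)) k = ∑ k, p (c ℓ) k * q (c ℓ) k := by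
  intro n c hcyc ℓ
  have hu_const : u (q (c (ℓ + 1))) = u (q (c ℓ)) :=
    Fin.apply_eq_of_apply_add_one_le (f := fun m ↦ u (q (c m)))
      (fun m ↦ hrat _ _ (hqQ _) (hcyc m)) _ _
  refine (hcyc ℓ).eq_of_not_lt fun hlt ↦ hu_const.not_lt ?_
  have hbudget : Continuous fun x : Fin K → ℝ ↦ ∑ k, p (c ℓ) k * x k := by fun_prop
  exact lt_of_forall_le_of_localNonsat (hlns _ (hqQ _)) hbudget.continuousAt hlt (hrat (c ℓ))

/-- necessity direction of Afriat's theorem: if a locally non-satiated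
utility function `u` on the consumption space `Q` rationalises the pooled dataset,
then every cyclic sequence of observations whose consecutive budget valuations are
weakly affordable must in fact satisfy budget equality along the whole cycle. -/
theorem stmt_1 {N K : ℕ} (Q : Set (Fin K → ℝ)) (hQ : ∀ x ∈ Q, ∀ k, 0 ≤ x k)
    (p q : Fin N → Fin K → ℝ)
    (hp : ∀ i k, 0 < p i k) (hqQ : ∀ i, q i ∈ Q)
    (u : (Fin K → ℝ) → ℝ)
    (hlns : ∀ x ∈ Q, ∀ ε > (0 : ℝ), ∃ y ∈ Q, dist y x < ε ∧ u x < u y)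
    (hrat : ∀ i, ∀ x ∈ Q, (∑ k, p i k * x k) ≤ (∑ k, p i k * q i k) → u x ≤ u (q i)) :
    ∀ (n : ℕ) (c : Fin (n + 1) → Fin N),
      (∀ ℓ : Fin (n + 1), ∑ k, p (c ℓ) k * q (c (ℓ + 1)) k ≤ ∑ k, p (c ℓ) k * q (c ℓ) k) →
      ∀ ℓ : Fin (n + 1), ∑ k, p (c ℓ) k * q (c (ℓ + 1)) k = ∑ k, p (c ℓ) k * q (c ℓ) k :=
  stmt_1_general Q p q hqQ u hlns hrat
end

section
/- Define the relation R on vertices of the graph G with Laspeyres weights w(i,j) = (p_i · q_j)/(p_i · q_i): u R v iff there is a walk from u to v all of whose edge weights are ≤ 1 (an RP-walk), and u P v iff at least one inequality in such a walk is strict. If a locally non-satiated utility function u_RC rationalises the pooled dataset, then i R j implies u_RC(q_i) ≥ u_RC(q_j), and i P j implies u_RC(q_i) > u_RC(q_j). -/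
/-- One directed edge of the Laspeyres-weighted graph has weight ≤ 1:
`w(i,j) = (p_i · q_j)/(p_i · q_i) ≤ 1`, i.e. `p_i · q_j ≤ p_i · q_i`. -/
def RPstep {N K : ℕ} (p q : Fin N → Fin K → ℝ) (i j : Fin N) : Prop :=
  (∑ k, p i k * q j k) ≤ ∑ k, p i k * q i k

/-- `i R j`: there is an RP-walk (a walk all of whose edge weights are ≤ 1)
from `i` to `j`. -/
def RPrel {N K : ℕ} (p q : Fin N → Fin K → ℝ) : Fin N → Fin N → Prop :=
  Relation.ReflTransGen (RPstep p q)

/-- `i P j`: there is a strict RP-walk from `i` to `j`, i.e. an RP-walk at least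
one of whose edge weights is strictly below 1. -/
def RPstrict {N K : ℕ} (p q : Fin N → Fin K → ℝ) (i j : Fin N) : Prop :=
  ∃ a b : Fin N, RPrel p q i a ∧
    ((∑ k, p a k * q b k) < ∑ k, p a k * q a k) ∧ RPrel p q b j

/-- if a locally non-satiated utility `u_RC` rationalises the pooled
dataset, then `i R j` implies `u_RC(q_i) ≥ u_RC(q_j)` and `i P j` implies
`u_RC(q_i) > u_RC(q_j)`. -/
theorem stmt_3 {N K : ℕ} (p q : Fin N → Fin K → ℝ)
    (hp : ∀ i k, 0 < p i k) (hq : ∀ i k, 0 ≤ q i k)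
    (hm : ∀ i, 0 < ∑ k, p i k * q i k)
    (u_RC : (Fin K → ℝ) → ℝ)
    (hlns : ∀ x : Fin K → ℝ, (∀ k, 0 ≤ x k) → ∀ ε > (0 : ℝ),
      ∃ y : Fin K → ℝ, (∀ k, 0 ≤ y k) ∧ dist y x < ε ∧ u_RC x < u_RC y)
    (hrat : ∀ i, ∀ x : Fin K → ℝ, (∀ k, 0 ≤ x k) →
      (∑ k, p i k * x k) ≤ (∑ k, p i k * q i k) → u_RC x ≤ u_RC (q i)) :
    (∀ i j, RPrel p q i j → u_RC (q j) ≤ u_RC (q i)) ∧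
    (∀ i j, RPstrict p q i j → u_RC (q j) < u_RC (q i)) := by

  have hR : ∀ i j, RPrel p q i j → u_RC (q j) ≤ u_RC (q i) := by
    intro i j h
    induction h with
    | refl => exact le_refl _
    | tail _ hstep ih =>
      exact le_trans (hrat _ _ (hq _) hstep) ih
  refine ⟨hR, ?_⟩
  rintro i j ⟨a, b, h1, hlt, h2⟩
  have key : u_RC (q b) < u_RC (q a) := by
    set δ := (∑ k, p a k * q a k) - (∑ k, p a k * q b k) with hδ
    have hδpos : 0 < δ := by simpa [hδ] using sub_pos.mpr hlt
    set S := ∑ k, p a k with hS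
    have hSnn : 0 ≤ S := Finset.sum_nonneg fun k _ => (hp a k).le
    have hεpos : 0 < δ / (S + 1) := div_pos hδpos (by linarith)
    obtain ⟨y, hy, hd, hu⟩ := hlns (q b) (hq b) _ hεpos
    have hyle : (∑ k, p a k * y k) ≤ ∑ k, p a k * q a k := by
      have hbound : ∀ k, p a k * y k ≤ p a k * q b k + p a k * (δ / (S + 1)) := by
        intro k
        have h1 : y k - q b k ≤ δ / (S + 1) := by
          have := dist_le_pi_dist y (q b) k
          have : |y k - q b k| ≤ dist y (q b) := by
            simpa [Real.dist_eq] using this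
          linarith [le_abs_self (y k - q b k), hd.le]
        nlinarith [(hp a k).le]
      calc (∑ k, p a k * y k) ≤ ∑ k, (p a k * q b k + p a k * (δ / (S + 1))) :=
            Finset.sum_le_sum fun k _ => hbound k
        _ = (∑ k, p a k * q b k) + S * (δ / (S + 1)) := by
            rw [Finset.sum_add_distrib, ← Finset.sum_mul]
        _ ≤ ∑ k, p a k * q a k := by
            have : S * (δ / (S + 1)) < δ := by
              rw [mul_div_assoc'] at *
              rw [div_lt_iff₀ (by linarith : (0:ℝ) < S + 1)]
              nlinarith
            linarith
    exact lt_of_lt_of_le hu (hrat a y hy hyle)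
  exact lt_of_le_of_lt (hR b j h2) (lt_of_lt_of_le key (hR i a h1))
end
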